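/- arXiv:1708.06267 — 4 statements merged into one kernel-verified Lean document; each statement's English description precedes it below -/
import Mathlib

section
/- Let G be a finite group, G₀ a normal subgroup such that G/G₀ is cyclic, and suppose |G| = e·f where e = |G₀|. Write f = pʳ·f₀ with p prime, p ∤ e and p ∤ f₀. Then the kernel C of the map G → G/G₀ given by g ↦ g^{f₀}G₀ is a normal subgroup of G containing G₀, of order e·f₀ and index pʳ, and every complement of C in G is a Sylow p-subgroup of G; in particular C has a complement in G (by Schur–Zassenhaus) and any subgroup of G of order pʳ is a complement of C. -/
/-!
Since `G ⧸ G₀` is cyclic of order `pʳ f₀`, the elements killed by the `f₀`-th power map form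
its unique subgroup of order `f₀`, so their preimage `C` has index `pʳ` and order `e f₀`,
which is prime to `p`. A complement of `C` therefore has order `pʳ`, the full `p`-part of
`|G|`, and is Sylow; conversely a subgroup of order `pʳ` meets `C` trivially by coprimality
and is a complement by counting, and a complement exists by Schur–Zassenhaus.
-/

section PowPreimage

variable {G Q : Type*} [Group G] [CommGroup Q] (π : G →* Q) (d : ℕ) (C : Subgroup G)

theorem Subgroup.eq_comap_ker_powMonoidHom (hC : ∀ g : G, g ∈ C ↔ π g ^ d = 1) :
    C = (powMonoidHom d : Q →* Q).ker.comap π :=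
  Subgroup.ext hC

theorem Subgroup.normal_of_forall_mem_iff_pow_eq_one (hC : ∀ g : G, g ∈ C ↔ π g ^ d = 1) :
    C.Normal :=
  C.eq_comap_ker_powMonoidHom π d hC ▸ Subgroup.Normal.comap inferInstance π

theorem Subgroup.index_of_forall_mem_iff_pow_eq_one [IsCyclic Q] [Finite Q]
    (hπ : Function.Surjective π) (hC : ∀ g : G, g ∈ C ↔ π g ^ d = 1) :
    C.index = Nat.card Q / (Nat.card Q).gcd d := by
  rw [C.eq_comap_ker_powMonoidHom π d hC, Subgroup.index_comap_of_surjective _ hπ,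
    IsCyclic.index_powMonoidHom_ker]

end PowPreimage

theorem Subgroup.IsComplement'.exists_sylow_eq {G : Type*} [Group G] {p : ℕ} [Fact p.Prime]
    {H K : Subgroup G} (h : H.IsComplement' K) (hK : IsPGroup p K) (hH : ¬ p ∣ Nat.card H) :
    ∃ P : Sylow p G, (P : Subgroup G) = K :=
  ⟨hK.toSylow (h.index_eq_card ▸ hH), hK.toSylow_coe _⟩

/-- Schur–Zassenhaus style complement to the kernel of
`g ↦ g^{f₀} G₀` in a finite group with cyclic quotient `G/G₀`. -/
theorem stmt0 {G : Type*} [Group G] [Finite G] (G₀ : Subgroup G) [G₀.Normal]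
    (hcyc : IsCyclic (G ⧸ G₀)) (e f p r f₀ : ℕ) (hp : p.Prime)
    (he : e = Nat.card G₀) (hef : Nat.card G = e * f) (hf : f = p ^ r * f₀)
    (hpe : ¬ p ∣ e) (hpf₀ : ¬ p ∣ f₀)
    (C : Subgroup G) (hC : ∀ g : G, g ∈ C ↔ ((g : G ⧸ G₀)) ^ f₀ = 1) :
    C.Normal ∧ G₀ ≤ C ∧ Nat.card C = e * f₀ ∧ C.index = p ^ r ∧
    (∀ P : Subgroup G, C.IsComplement' P → ∃ Q : Sylow p G, (Q : Subgroup G) = P) ∧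
    (∃ P : Subgroup G, C.IsComplement' P) ∧
    (∀ P : Subgroup G, Nat.card P = p ^ r → C.IsComplement' P) := by
  have : Fact p.Prime := ⟨hp⟩
  -- makes `x ↦ x ^ f₀` a homomorphism of `G ⧸ G₀`, so that `C` is the preimage of its kernel
  let : CommGroup (G ⧸ G₀) := IsCyclic.commGroup
  have hcardG : Nat.card G = e * f₀ * p ^ r := by rw [hef, hf]; ring
  have hquot : Nat.card (G ⧸ G₀) = p ^ r * f₀ := by
    have := G₀.card_mul_index
    rw [← he, hef, hf] at this
    exact Nat.eq_of_mul_eq_mul_left (he ▸ Nat.card_pos) this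
  have hf₀ : 0 < f₀ := Nat.pos_of_ne_zero (by rintro rfl; exact hpf₀ (dvd_zero p))
  have hCindex : C.index = p ^ r := by
    rw [C.index_of_forall_mem_iff_pow_eq_one _ f₀ (QuotientGroup.mk'_surjective G₀) hC, hquot,
      Nat.gcd_mul_left_left, Nat.mul_div_cancel _ hf₀]
  have hCcard : Nat.card C = e * f₀ :=
    Nat.eq_of_mul_eq_mul_right (pow_pos hp.pos r)
      (by rw [← hCindex, C.card_mul_index, hcardG, hCindex])
  have hpC : ¬ p ∣ e * f₀ := fun h => (hp.dvd_mul.mp h).elim hpe hpf₀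
  have hcop : (e * f₀).Coprime (p ^ r) := ((hp.coprime_iff_not_dvd).mpr hpC).symm.pow_right r
  have hCnormal := C.normal_of_forall_mem_iff_pow_eq_one (QuotientGroup.mk' G₀) f₀ hC
  refine ⟨hCnormal,
    fun g hg => (hC g).mpr (by rw [(QuotientGroup.eq_one_iff g).mpr hg, one_pow]),
    hCcard, hCindex, fun P hP => ?_, ?_, fun P hP => ?_⟩
  · have hPcard : Nat.card P = p ^ r :=
      Nat.eq_of_mul_eq_mul_left (Nat.card_pos (α := C))
        (by rw [hP.card_mul_card, hcardG, hCcard])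
    exact hP.exists_sylow_eq (IsPGroup.of_card hPcard) (hCcard ▸ hpC)
  · exact Subgroup.exists_right_complement'_of_coprime (by rwa [hCcard, hCindex])
  · refine Subgroup.isComplement'_of_coprime ?_ (by rwa [hCcard, hP])
    rw [hCcard, hP, hcardG]
end

section
/- Let a group Γ act on a finite group N = S × T (internal direct product of Γ-stable subgroups S, T) by group automorphisms, and let Γ also act on a commutative ring R by ring automorphisms, so that Γ acts on the group ring R[N]. If Γ acts trivially on T, then the fixed subring R[N]^Γ equals the group ring (R[S]^Γ)[T]. -/
/-!
An element `x` of `R[N]` is `Γ`-fixed exactly when its coefficients are equivariant,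
`x (γ • n) = γ • x n`. Write `x = ∑_{t ∈ T} x_t * t`, where `x_t` is the part of `x` on the
coset `S t` translated back to `S`. Since `Γ` fixes `t` and preserves `S`, the coefficient
`x_t (γ • s) = x (γ • (s t))` is `γ • x_t s`, so each `x_t` lies in `R[S]^Γ`.
-/

open MonoidAlgebra

def fixedSubring {A Γ : Type*} [Ring A] [Group Γ] (ρ : Γ →* RingAut A) : Subring A where
  carrier := {x | ∀ γ, ρ γ x = x}
  zero_mem' _ := map_zero _
  one_mem' _ := map_one _
  add_mem' ha hb γ := by rw [map_add, ha γ, hb γ]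
  mul_mem' ha hb γ := by rw [map_mul, ha γ, hb γ]
  neg_mem' ha γ := by rw [map_neg, ha γ]

namespace MonoidAlgebra

section Equivariance

variable {R N : Type*} [Semiring R]

theorem coeff_map_of_map_single {f : R[N] →+ R[N]} {e : N → N} (he : e.Injective) {τ : R →+ R}
    (hf : ∀ n r, f (single n r) = single (e n) (τ r)) (x : R[N]) (n : N) :
    (f x).coeff (e n) = τ (x.coeff n) := by
  classical
  induction x using MonoidAlgebra.induction_linear with
  | zero => simp
  | add x y hx hy => simp [hx, hy]
  | single m r =>
    rw [hf, coeff_single, coeff_single, Finsupp.single_apply, Finsupp.single_apply, he.eq_iff]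
    split_ifs <;> simp

variable [Mul N] {Γ : Type*} [Group Γ] {φ : Γ →* RingAut R} {ψ : Γ →* MulAut N}
  {ρ : Γ →* RingAut R[N]}

theorem forall_map_eq_iff_coeff_equivariant
    (hρ : ∀ γ r n, ρ γ (single n r) = single (ψ γ n) (φ γ r)) (x : R[N]) :
    (∀ γ, ρ γ x = x) ↔ ∀ γ n, x.coeff (ψ γ n) = φ γ (x.coeff n) := by
  have hcoeff (γ : Γ) (n : N) : (ρ γ x).coeff (ψ γ n) = φ γ (x.coeff n) :=
    coeff_map_of_map_single (f := (ρ γ).toAddEquiv.toAddMonoidHom) (ψ γ).injective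
      (τ := (φ γ).toAddEquiv.toAddMonoidHom) (fun n r => hρ γ r n) x n
  refine ⟨fun hx γ n => by rw [← hcoeff, hx], fun hx γ => ?_⟩
  ext m
  obtain ⟨n, rfl⟩ := (ψ γ).surjective m
  rw [hcoeff, hx]

end Equivariance

section CosetComponent

variable {R N : Type*} [Semiring R] [Group N] (S : Subgroup N)

open Classical in
noncomputable def cosetComponent (x : R[N]) (t : N) : R[N] :=
  ofCoeff ((x * single t⁻¹ 1).coeff.filter (· ∈ S))

variable {S}

theorem coeff_cosetComponent_of_mem {n : N} (hn : n ∈ S) (x : R[N]) (t : N) :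
    (cosetComponent S x t).coeff n = x.coeff (n * t) := by
  classical
  simp [cosetComponent, hn]

theorem coeff_cosetComponent_of_notMem {n : N} (hn : n ∉ S) (x : R[N]) (t : N) :
    (cosetComponent S x t).coeff n = 0 := by
  classical
  simp [cosetComponent, hn]

theorem sum_cosetComponent_mul_single {T : Subgroup N} [Fintype T]
    (hST : ∀ n : N, ∃! st : S × T, (st.1 : N) * (st.2 : N) = n) (x : R[N]) :
    ∑ t : T, cosetComponent S x t * single (t : N) 1 = x := by
  ext n
  obtain ⟨⟨s₀, t₀⟩, hn, huniq⟩ := hST n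
  have hcoset (t : T) (h : n * (t : N)⁻¹ ∈ S) : t = t₀ :=
    congrArg Prod.snd (huniq (⟨_, h⟩, t) (by simp))
  rw [coeff_sum, Finset.sum_apply', Finset.sum_eq_single t₀]
  · rw [coeff_mul_single_apply, coeff_cosetComponent_of_mem (by simp [← hn]), inv_mul_cancel_right,
      mul_one]
  · intro t _ ht
    rw [coeff_mul_single_apply, coeff_cosetComponent_of_notMem (mt (hcoset t) ht), zero_mul]
  · simp

theorem map_cosetComponent_of_forall_map_eq {Γ : Type*} [Group Γ] {φ : Γ →* RingAut R}
    {ψ : Γ →* MulAut N} {ρ : Γ →* RingAut R[N]}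
    (hρ : ∀ γ r n, ρ γ (single n r) = single (ψ γ n) (φ γ r))
    (hSψ : ∀ γ, ∀ s ∈ S, ψ γ s ∈ S) {t : N} (ht : ∀ γ, ψ γ t = t) {x : R[N]}
    (hx : ∀ γ, ρ γ x = x) :
    ∀ γ, ρ γ (cosetComponent S x t) = cosetComponent S x t := by
  rw [forall_map_eq_iff_coeff_equivariant hρ] at hx ⊢
  intro γ n
  by_cases hn : n ∈ S
  · rw [coeff_cosetComponent_of_mem (hSψ γ n hn), coeff_cosetComponent_of_mem hn, ← hx,
      map_mul (ψ γ), ht]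
  · have hψn : ψ γ n ∉ S := fun h => hn (by simpa using hSψ γ⁻¹ _ h)
    rw [coeff_cosetComponent_of_notMem hψn, coeff_cosetComponent_of_notMem hn, map_zero]

end CosetComponent

end MonoidAlgebra

theorem stmt2_general {R : Type*} [CommRing R] {N : Type*} [Group N] [Finite N]
    {Γ : Type*} [Group Γ]
    (φ : Γ →* RingAut R) (ψ : Γ →* MulAut N)
    (S T : Subgroup N)
    (hSψ : ∀ γ : Γ, ∀ s ∈ S, ψ γ s ∈ S)
    (hTtriv : ∀ γ : Γ, ∀ t ∈ T, ψ γ t = t)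
    (hST : ∀ n : N, ∃! st : S × T, (st.1 : N) * (st.2 : N) = n)
    (ρ : Γ →* RingAut (MonoidAlgebra R N))
    (hρ : ∀ (γ : Γ) (r : R) (n : N),
      ρ γ (MonoidAlgebra.single n r) = MonoidAlgebra.single (ψ γ n) (φ γ r)) :
    {x : MonoidAlgebra R N | ∀ γ : Γ, ρ γ x = x} =
      (Subring.closure
        ({x : MonoidAlgebra R N | (∀ γ : Γ, ρ γ x = x) ∧ ∀ n : N, n ∉ S → x.coeff n = 0}
          ∪ {x : MonoidAlgebra R N | ∃ t ∈ T, x = MonoidAlgebra.single t 1}) :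
        Set (MonoidAlgebra R N)) := by
  have : Fintype T := Fintype.ofFinite T
  refine Set.Subset.antisymm (fun x hx => ?_) ?_
  · rw [← sum_cosetComponent_mul_single hST x]
    refine sum_mem fun t _ => mul_mem (Subring.subset_closure (Or.inl ⟨?_, ?_⟩))
      (Subring.subset_closure (Or.inr ⟨t, t.2, rfl⟩))
    · exact map_cosetComponent_of_forall_map_eq hρ hSψ (fun γ => hTtriv γ t t.2) hx
    · exact fun n hn => coeff_cosetComponent_of_notMem hn x t
  · refine Subring.closure_le (t := fixedSubring ρ).mpr ?_
    rintro x (⟨hx, -⟩ | ⟨t, ht, rfl⟩) γ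
    · exact hx γ
    · rw [hρ, hTtriv γ t ht, map_one]

/-- If `Γ` acts on `R[N]` diagonally (by ring automorphisms of `R`
and group automorphisms of `N = S × T`, trivially on `T`), then the fixed
subring `R[N]^Γ` is the group ring `(R[S]^Γ)[T]`, i.e. the subring generated by
the fixed elements supported on `S` together with the elements of `T`. -/
theorem stmt2 {R : Type*} [CommRing R] {N : Type*} [Group N] [Finite N]
    {Γ : Type*} [Group Γ]
    (φ : Γ →* RingAut R) (ψ : Γ →* MulAut N)
    (S T : Subgroup N)
    (hSψ : ∀ γ : Γ, ∀ s ∈ S, ψ γ s ∈ S)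
    (hTψ : ∀ γ : Γ, ∀ t ∈ T, ψ γ t ∈ T)
    (hTtriv : ∀ γ : Γ, ∀ t ∈ T, ψ γ t = t)
    (hST : ∀ n : N, ∃! st : S × T, (st.1 : N) * (st.2 : N) = n)
    (ρ : Γ →* RingAut (MonoidAlgebra R N))
    (hρ : ∀ (γ : Γ) (r : R) (n : N),
      ρ γ (MonoidAlgebra.single n r) = MonoidAlgebra.single (ψ γ n) (φ γ r)) :
    {x : MonoidAlgebra R N | ∀ γ : Γ, ρ γ x = x} =
      (Subring.closure
        ({x : MonoidAlgebra R N | (∀ γ : Γ, ρ γ x = x) ∧ ∀ n : N, n ∉ S → x.coeff n = 0}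
          ∪ {x : MonoidAlgebra R N | ∃ t ∈ T, x = MonoidAlgebra.single t 1}) :
        Set (MonoidAlgebra R N)) :=
  stmt2_general φ ψ S T hSψ hTtriv hST ρ hρ
end

section
/- Let L/K be a finite Galois extension of fields with group G, let N be a regular subgroup of Perm(G), and define the K-algebra isomorphism L → Map(G, L)^G by x ↦ f_x = Σ_{g∈G} g(x) u_g. Then the element θ_N = Σ_{η∈N} η of L[N] satisfies θ_N · f_x = Σ_{g∈G} Tr_{L/K}(x) u_g; in particular, if Tr_{L/K}(x) = 1 then θ_N · f_x = 1 in Map(G, L). -/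
/-- For a finite Galois extension `L/K` with group `G`, a regular
subgroup `N ≤ Perm G`, and `f_x = Σ_g g(x) u_g`, the element `θ_N = Σ_{η∈N} η`
satisfies `θ_N · f_x = Σ_g Tr_{L/K}(x) u_g`; in particular if `Tr_{L/K}(x) = 1`
then `θ_N · f_x = 1`. -/
theorem stmt10 {K L : Type*} [Field K] [Field L] [Algebra K L]
    [FiniteDimensional K L] [IsGalois K L]
    (N : Subgroup (Equiv.Perm (L ≃ₐ[K] L))) [Fintype N]
    (hreg : ∀ g h : L ≃ₐ[K] L, ∃! η : N, (η : Equiv.Perm (L ≃ₐ[K] L)) g = h)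
    (x : L) :
    (∀ g : L ≃ₐ[K] L,
      (∑ η : N, ((η : Equiv.Perm (L ≃ₐ[K] L))⁻¹ g) x) = ∑ h : L ≃ₐ[K] L, h x) ∧
    ((∑ h : L ≃ₐ[K] L, h x) = 1 →
      (fun g : L ≃ₐ[K] L => ∑ η : N, ((η : Equiv.Perm (L ≃ₐ[K] L))⁻¹ g) x) =
        fun _ => 1) := by
  have key : ∀ g : L ≃ₐ[K] L,
      (∑ η : N, ((η : Equiv.Perm (L ≃ₐ[K] L))⁻¹ g) x) = ∑ h : L ≃ₐ[K] L, h x := by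
    intro g
    apply Fintype.sum_bijective (fun η : N => ((η : Equiv.Perm (L ≃ₐ[K] L))⁻¹ g))
    · constructor
      · intro a b hab
        obtain ⟨η, hη, huniq⟩ := hreg ((a : Equiv.Perm (L ≃ₐ[K] L))⁻¹ g) g
        have ha : a = η := huniq a (by simp)
        have hb : b = η := huniq b (by simp only at hab; rw [hab]; simp)
        rw [ha, hb]
      · intro h
        obtain ⟨η, hη, _⟩ := hreg h g
        exact ⟨η, by simp [← hη]⟩
    · intro η; rfl
  refine ⟨key, fun htr => ?_⟩
  funext g
  rw [key g, htr]
end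

section
/- Let G be a finite group, M = Map(G, L) for a Galois extension L/K with group G, where G acts on M by (g·f)(h) = g(f(g⁻¹h)). Then the map x ↦ f_x := Σ_{g∈G} g(x) u_g is a K-algebra isomorphism from L onto the fixed ring M^G. -/
/-- For a finite Galois extension `L/K` with group `G`, the map
`x ↦ f_x = Σ_g g(x) u_g` is a `K`-algebra isomorphism of `L` onto the fixed
ring `Map(G, L)^G`, where `G` acts by `(g·f)(h) = g(f(g⁻¹h))`. -/
theorem stmt19 {K L : Type*} [Field K] [Field L] [Algebra K L]
    [FiniteDimensional K L] [IsGalois K L] :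
    let F : L → ((L ≃ₐ[K] L) → L) := fun x g => g x
    (∀ x y : L, F (x + y) = F x + F y) ∧
    (∀ x y : L, F (x * y) = F x * F y) ∧
    (F 1 = 1) ∧
    (∀ c : K, F (algebraMap K L c) = fun _ => algebraMap K L c) ∧
    Function.Injective F ∧
    Set.range F = {f : (L ≃ₐ[K] L) → L |
      ∀ g h : L ≃ₐ[K] L, g (f (g⁻¹ * h)) = f h} := by
  intro F
  refine ⟨fun x y => funext fun g => map_add g x y,
    fun x y => funext fun g => map_mul g x y,
    funext fun g => map_one g,
    fun c => funext fun g => g.commutes c,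
    fun x y hxy => ?_, ?_⟩
  · have := congrFun hxy 1
    simpa [F] using this
  · ext f
    constructor
    · rintro ⟨x, rfl⟩ g h
      simp [F, ← AlgEquiv.mul_apply]
    · intro hf
      refine ⟨f 1, funext fun h => ?_⟩
      have := hf h h
      simpa [F] using this
end
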